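/- arXiv:1806.07880 — 3 statements merged into one kernel-verified Lean document; each statement's English description precedes it below -/
import Mathlib

section
/- For λ > 0 and l ∈ ℕ₀, ∫_{-1}^1 t · C_l^λ(t) · C_{l+1}^λ(t) · (1-t²)^{λ-1/2} dt = π·Γ(l+2λ+1) / (2^{2λ} · l! · (l+λ) · (l+λ+1) · Γ(λ)²). -/
/-!
Write `C_n^λ(t) = ∑ₖ aₖ (2t)^(n-2k)` and `w_λ(t) = (1 - t²)^(λ-1/2)`. Comparing coefficients
(the difference telescopes in `k`) gives the Rodrigues-type relation
`d/dt [w_{λ+1} C_n^{λ+1}] = -((n+1)(n+1+2λ)/(2λ)) w_λ C_{n+1}^λ`.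
Integrating `t^m` against it by parts lowers both the degree and the moment:
`(n+1)(n+1+2λ) ∫ t^m C_{n+1}^λ w_λ = 2λ m ∫ t^(m-1) C_n^{λ+1} w_{λ+1}`.
Hence `C_n^λ` is orthogonal to `t^m` for `m < n`, and `∫ t^n C_n^λ w_λ` reduces to the Beta
integral `∫ w_{λ+n}`. Since `t C_l^λ(t)` is `a₀ 2^l t^(l+1)` plus lower powers, only the leading
term survives against `C_{l+1}^λ`.
-/

open Real

/-- The Gegenbauer polynomial `C_l^λ(t)`, via its standard explicit formula
(equivalent to the generating-function definition
`∑ C_l^λ(t) r^l = (1 - 2tr + r²)^(-λ)`). -/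
noncomputable def gegenbauer (lam : ℝ) (l : ℕ) (t : ℝ) : ℝ :=
  ∑ k ∈ Finset.range (l / 2 + 1),
    (-1 : ℝ) ^ k * Real.Gamma (lam + l - k) /
      (Real.Gamma lam * (Nat.factorial k) * (Nat.factorial (l - 2 * k))) *
      (2 * t) ^ (l - 2 * k)

open MeasureTheory

/-- The coefficient `aₖ` of `(2t)^(n-2k)` in `C_n^λ`, extended by zero to `2k > n` so that the
defining sum may run over any long enough range. -/
noncomputable def gegenbauerCoeff (lam : ℝ) (n k : ℕ) : ℝ :=
  if 2 * k ≤ n then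
    (-1 : ℝ) ^ k * Gamma (lam + n - k) / (Gamma lam * k.factorial * (n - 2 * k).factorial)
  else 0

lemma gegenbauer_eq_sum_range (lam : ℝ) {n M : ℕ} (hM : n / 2 + 1 ≤ M) (t : ℝ) :
    gegenbauer lam n t
      = ∑ k ∈ Finset.range M, gegenbauerCoeff lam n k * (2 * t) ^ (n - 2 * k) := by
  rw [gegenbauer, ← Finset.sum_subset (Finset.range_subset_range.2 hM)]
  · refine Finset.sum_congr rfl fun k hk => ?_
    rw [gegenbauerCoeff, if_pos (by rw [Finset.mem_range] at hk; omega)]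
  · intro k _ hk
    rw [Finset.mem_range, not_lt] at hk
    rw [gegenbauerCoeff, if_neg (by omega), zero_mul]

noncomputable def gegenbauerDeriv (lam : ℝ) (n : ℕ) (t : ℝ) : ℝ :=
  ∑ k ∈ Finset.range (n + 1),
    gegenbauerCoeff lam n k * (2 * ((n - 2 * k : ℕ) : ℝ)) * (2 * t) ^ (n - 2 * k - 1)

lemma hasDerivAt_gegenbauer (lam : ℝ) (n : ℕ) (t : ℝ) :
    HasDerivAt (gegenbauer lam n) (gegenbauerDeriv lam n t) t := by
  rw [funext (gegenbauer_eq_sum_range lam (M := n + 1) (by omega)), gegenbauerDeriv]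
  refine HasDerivAt.fun_sum fun k _ => ?_
  have hlin : HasDerivAt (fun x : ℝ => 2 * x) 2 t := by
    simpa using (hasDerivAt_id t).const_mul (2 : ℝ)
  exact ((hlin.fun_pow (n - 2 * k)).const_mul (gegenbauerCoeff lam n k)).congr_deriv (by ring)

lemma continuous_gegenbauer (lam : ℝ) (n : ℕ) : Continuous (gegenbauer lam n) :=
  continuous_iff_continuousAt.2 fun t => (hasDerivAt_gegenbauer lam n t).continuousAt

lemma gegenbauer_zero {lam : ℝ} (hlam : Gamma lam ≠ 0) (t : ℝ) : gegenbauer lam 0 t = 1 := by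
  simp [gegenbauer, hlam]

lemma gegenbauerCoeff_zero (lam : ℝ) (n : ℕ) :
    gegenbauerCoeff lam n 0 = Gamma (lam + n) / (Gamma lam * n.factorial) := by
  simp [gegenbauerCoeff]

lemma gegenbauerCoeff_add_one_left {lam : ℝ} (hlam : 0 < lam) (n k : ℕ) :
    lam * gegenbauerCoeff (lam + 1) n k
      = ((n : ℝ) + 1 - 2 * k) * gegenbauerCoeff lam (n + 1) k := by
  have hΓ : Gamma lam ≠ 0 := (Gamma_pos_of_pos hlam).ne'
  unfold gegenbauerCoeff
  rcases lt_trichotomy (2 * k) (n + 1) with hlt | heq | hgt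
  · obtain ⟨r, rfl⟩ : ∃ r, n = 2 * k + r := ⟨n - 2 * k, by omega⟩
    rw [if_pos (by omega), if_pos (by omega), show 2 * k + r + 1 - 2 * k = r + 1 by omega,
      Nat.add_sub_cancel_left, Gamma_add_one hlam.ne']
    push_cast [Nat.factorial_succ]
    rw [show lam + 1 + (2 * k + r) - k = lam + (2 * k + r + 1) - k by ring]
    field_simp
    ring
  · have h2k : (2 * k : ℝ) = n + 1 := by exact_mod_cast heq
    rw [if_neg (by omega), if_pos heq.le, show (n : ℝ) + 1 - 2 * k = 0 by linarith]
    ring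
  · rw [if_neg (by omega), if_neg (by omega)]
    ring

lemma gegenbauerCoeff_succ_right {lam : ℝ} (hlam : 0 < lam) (n k : ℕ) :
    lam * ((n - 2 * k : ℕ) : ℝ) * gegenbauerCoeff (lam + 1) n k
      = -((k + 1) * (lam + n - k)) * gegenbauerCoeff lam (n + 1) (k + 1) := by
  unfold gegenbauerCoeff
  rcases lt_trichotomy (2 * k + 1) (n + 1) with hlt | heq | hgt
  · obtain ⟨r, rfl⟩ : ∃ r, n = 2 * k + 1 + r := ⟨n - 2 * k - 1, by omega⟩
    have hpos : 0 < lam + (k + r + 1 : ℝ) := by positivity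
    rw [if_pos (by omega), if_pos (by omega), show 2 * k + 1 + r - 2 * k = r + 1 by omega,
      show 2 * k + 1 + r + 1 - 2 * (k + 1) = r by omega, Gamma_add_one hlam.ne']
    push_cast [Nat.factorial_succ]
    rw [show lam + 1 + (2 * k + 1 + r) - k = lam + (k + r + 1) + 1 by ring,
      show lam + (2 * k + 1 + r + 1) - (k + 1) = lam + (k + r + 1) by ring,
      Gamma_add_one hpos.ne']
    have hΓ : Gamma (lam + (k + r + 1)) ≠ 0 := (Gamma_pos_of_pos hpos).ne'
    have hΓ' : Gamma lam ≠ 0 := (Gamma_pos_of_pos hlam).ne'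
    field_simp
    ring
  · rw [show n - 2 * k = 0 by omega, if_neg (show ¬2 * (k + 1) ≤ n + 1 by omega)]
    simp
  · rw [if_neg (by omega), if_neg (by omega)]
    ring

lemma gegenbauer_lowering_summand {lam : ℝ} (hlam : 0 < lam) (n k : ℕ) (t : ℝ) :
    2 * lam * ((1 - t ^ 2) * (gegenbauerCoeff (lam + 1) n k
          * (2 * ((n - 2 * k : ℕ) : ℝ)) * (2 * t) ^ (n - 2 * k - 1))
        - (2 * lam + 1) * t * (gegenbauerCoeff (lam + 1) n k * (2 * t) ^ (n - 2 * k)))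
      + (n + 1) * (n + 1 + 2 * lam) * (gegenbauerCoeff lam (n + 1) k * (2 * t) ^ (n + 1 - 2 * k))
      = 4 * k * (lam + n + 1 - k) * gegenbauerCoeff lam (n + 1) k * (2 * t) ^ (n + 1 - 2 * k)
        - 4 * (k + 1) * (lam + n - k) * gegenbauerCoeff lam (n + 1) (k + 1)
          * (2 * t) ^ (n - 2 * k - 1) := by
  have hb := gegenbauerCoeff_add_one_left hlam n k
  have hab := gegenbauerCoeff_succ_right hlam n k
  by_cases hk : 2 * k ≤ n
  · obtain ⟨p, rfl⟩ : ∃ p, n = 2 * k + p := ⟨n - 2 * k, by omega⟩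
    simp only [show 2 * k + p - 2 * k = p by omega, show 2 * k + p + 1 - 2 * k = p + 1 by omega]
      at hab ⊢
    push_cast at hb hab ⊢
    rcases p with _ | q
    · simp only [Nat.cast_zero, zero_tsub, pow_zero] at hab ⊢
      linear_combination 4 * hab - ((2 * lam + 1) * (2 * t)) * hb
    · simp only [add_tsub_cancel_right]
      push_cast at hb hab ⊢
      linear_combination 4 * (2 * t) ^ q * hab - ((q + 2 * lam + 2) * (2 * t) ^ (q + 2)) * hb
  · have hb0 : gegenbauerCoeff (lam + 1) n k = 0 := by rw [gegenbauerCoeff, if_neg hk]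
    rw [hb0] at hb hab
    rw [hb0]
    linear_combination (-((n + 1 - 2 * k + 2 * lam) * (2 * t) ^ (n + 1 - 2 * k))) * hb
      + 4 * (2 * t) ^ (n - 2 * k - 1) * hab

lemma one_sub_sq_mul_gegenbauerDeriv_sub_mul_gegenbauer {lam : ℝ} (hlam : 0 < lam) (n : ℕ)
    (t : ℝ) :
    (1 - t ^ 2) * gegenbauerDeriv (lam + 1) n t - (2 * lam + 1) * t * gegenbauer (lam + 1) n t
      = -((n + 1) * (n + 1 + 2 * lam) / (2 * lam)) * gegenbauer lam (n + 1) t := by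
  let G : ℕ → ℝ := fun k =>
    4 * k * (lam + n + 1 - k) * gegenbauerCoeff lam (n + 1) k * (2 * t) ^ (n + 1 - 2 * k)
  have hsum : 2 * lam * ((1 - t ^ 2) * gegenbauerDeriv (lam + 1) n t
        - (2 * lam + 1) * t * gegenbauer (lam + 1) n t)
      + (n + 1) * (n + 1 + 2 * lam) * gegenbauer lam (n + 1) t
      = ∑ k ∈ Finset.range (n + 1), (G k - G (k + 1)) := by
    rw [gegenbauerDeriv, gegenbauer_eq_sum_range (lam + 1) (M := n + 1) (by omega),
      gegenbauer_eq_sum_range lam (M := n + 1) (by omega)]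
    simp only [Finset.mul_sum, ← Finset.sum_sub_distrib, ← Finset.sum_add_distrib]
    refine Finset.sum_congr rfl fun k _ => ?_
    rw [gegenbauer_lowering_summand hlam]
    simp only [G, show n + 1 - 2 * (k + 1) = n - 2 * k - 1 by omega]
    push_cast
    ring
  have hG0 : G 0 = 0 := by simp [G]
  have hGn : G (n + 1) = 0 := by simp [G, gegenbauerCoeff]
  rw [Finset.sum_range_sub', hG0, hGn] at hsum
  field_simp
  linear_combination hsum

lemma intervalIntegrable_one_sub_sq_rpow {ν : ℝ} (hν : -1 < ν) :
    IntervalIntegrable (fun t : ℝ => (1 - t ^ 2) ^ ν) volume (-1) 1 := by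
  set C : ℝ := max 1 (2 ^ ν)
  have hC : ∀ s ∈ Set.Icc (1 : ℝ) 2, s ^ ν ≤ C := by
    rintro s ⟨h1, h2⟩
    rcases le_or_gt 0 ν with hν0 | hν0
    · exact le_max_of_le_right (rpow_le_rpow (by linarith) h2 hν0)
    · exact le_max_of_le_left (rpow_le_one_of_one_le_of_nonpos h1 hν0.le)
  have hleft : IntervalIntegrable (fun t : ℝ => (1 - t) ^ ν) volume (-1) 1 := by
    have h := (intervalIntegral.intervalIntegrable_rpow' hν (a := 2) (b := 0)).comp_sub_left 1
    norm_num at h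
    exact h
  have hright : IntervalIntegrable (fun t : ℝ => (1 + t) ^ ν) volume (-1) 1 := by
    have h := (intervalIntegral.intervalIntegrable_rpow' hν (a := 0) (b := 2)).comp_add_left 1
    norm_num at h
    exact h
  refine ((hleft.const_mul C).add (hright.const_mul C)).mono_fun'
    (by fun_prop : Measurable fun t : ℝ => (1 - t ^ 2) ^ ν).aestronglyMeasurable ?_
  rw [Set.uIoc_of_le (by norm_num)]
  filter_upwards [ae_restrict_mem measurableSet_Ioc] with t ⟨ht1, ht2⟩
  have hsplit : (1 - t ^ 2) ^ ν = (1 - t) ^ ν * (1 + t) ^ ν := by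
    rw [← mul_rpow (by linarith) (by linarith)]
    ring_nf
  have h1 : 0 ≤ (1 - t) ^ ν := rpow_nonneg (by linarith) ν
  have h2 : 0 ≤ (1 + t) ^ ν := rpow_nonneg (by linarith) ν
  rw [norm_of_nonneg (rpow_nonneg (by nlinarith) ν), hsplit]
  rcases le_total 0 t with ht | ht
  · nlinarith [hC (1 + t) ⟨by linarith, by linarith⟩]
  · nlinarith [hC (1 - t) ⟨by linarith, by linarith⟩]

lemma hasDerivAt_one_sub_sq_rpow_mul_gegenbauer {lam : ℝ} (hlam : 0 < lam) (n : ℕ) {x : ℝ}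
    (hx : x ∈ Set.Ioo (-1 : ℝ) 1) :
    HasDerivAt (fun t => (1 - t ^ 2) ^ (lam + 1 / 2) * gegenbauer (lam + 1) n t)
      (-((n + 1) * (n + 1 + 2 * lam) / (2 * lam)) *
        (gegenbauer lam (n + 1) x * (1 - x ^ 2) ^ (lam - 1 / 2))) x := by
  have hx2 : 0 < 1 - x ^ 2 := by nlinarith [hx.1, hx.2]
  have hbase : HasDerivAt (fun t : ℝ => 1 - t ^ 2) (-(2 * x)) x := by
    simpa using (hasDerivAt_pow 2 x).const_sub 1
  refine ((hbase.rpow_const (p := lam + 1 / 2) (Or.inl hx2.ne')).mul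
    (hasDerivAt_gegenbauer (lam + 1) n x)).congr_deriv ?_
  have hstar := one_sub_sq_mul_gegenbauerDeriv_sub_mul_gegenbauer hlam n x
  rw [show lam + 1 / 2 = lam - 1 / 2 + 1 by ring, rpow_add_one hx2.ne', add_sub_cancel_right]
  linear_combination (1 - x ^ 2) ^ (lam - 1 / 2) * hstar

noncomputable def gegenbauerMoment (lam : ℝ) (n m : ℕ) : ℝ :=
  ∫ t in (-1 : ℝ)..1, t ^ m * gegenbauer lam n t * (1 - t ^ 2) ^ (lam - 1 / 2)

lemma gegenbauerMoment_succ {lam : ℝ} (hlam : 0 < lam) (n m : ℕ) :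
    (n + 1) * (n + 1 + 2 * lam) * gegenbauerMoment lam (n + 1) m
      = 2 * lam * m * gegenbauerMoment (lam + 1) n (m - 1) := by
  set c : ℝ := (n + 1) * (n + 1 + 2 * lam) / (2 * lam)
  have hv : Continuous fun t : ℝ => (1 - t ^ 2) ^ (lam + 1 / 2) * gegenbauer (lam + 1) n t :=
    ((continuous_const.sub (continuous_pow 2)).rpow_const fun _ => Or.inr (by linarith)).mul
      (continuous_gegenbauer _ _)
  have hparts := intervalIntegral.integral_mul_deriv_eq_deriv_mul_of_hasDerivAt
    (a := -1) (b := 1) (continuous_pow m).continuousOn hv.continuousOn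
    (fun x _ => hasDerivAt_pow m x)
    (fun x hx => hasDerivAt_one_sub_sq_rpow_mul_gegenbauer hlam n (by simpa using hx))
    ((by fun_prop : Continuous fun x : ℝ => (m : ℝ) * x ^ (m - 1)).intervalIntegrable _ _)
    (((intervalIntegrable_one_sub_sq_rpow (by linarith : -1 < lam - 1 / 2)).continuousOn_mul
      (continuous_gegenbauer lam (n + 1)).continuousOn).const_mul (-c))
  simp only [one_pow, neg_one_sq, sub_self, zero_rpow (by linarith : lam + 1 / 2 ≠ 0), zero_mul,
    mul_zero, zero_sub] at hparts
  have hlhs : ∫ x in (-1 : ℝ)..1,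
        x ^ m * (-c * (gegenbauer lam (n + 1) x * (1 - x ^ 2) ^ (lam - 1 / 2)))
      = -c * gegenbauerMoment lam (n + 1) m := by
    rw [gegenbauerMoment, ← intervalIntegral.integral_const_mul]
    exact intervalIntegral.integral_congr fun x _ => by ring
  have hrhs : ∫ x in (-1 : ℝ)..1,
        (m : ℝ) * x ^ (m - 1) * ((1 - x ^ 2) ^ (lam + 1 / 2) * gegenbauer (lam + 1) n x)
      = m * gegenbauerMoment (lam + 1) n (m - 1) := by
    rw [gegenbauerMoment, ← intervalIntegral.integral_const_mul,
      show lam + 1 - 1 / 2 = lam + 1 / 2 by ring]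
    exact intervalIntegral.integral_congr fun x _ => by ring
  rw [hlhs, hrhs] at hparts
  simp only [c] at hparts
  field_simp at hparts
  linear_combination -hparts

lemma gegenbauerMoment_eq_zero_of_lt {lam : ℝ} (hlam : 0 < lam) {n m : ℕ} (hmn : m < n) :
    gegenbauerMoment lam n m = 0 := by
  obtain ⟨n, rfl⟩ : ∃ k, n = k + 1 := ⟨n - 1, by omega⟩
  have hc : ((n : ℝ) + 1) * (n + 1 + 2 * lam) ≠ 0 := by positivity
  refine (mul_eq_zero.1 ((gegenbauerMoment_succ hlam n m).trans ?_)).resolve_left hc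
  rcases m with _ | m
  · simp
  · rw [Nat.add_sub_cancel, gegenbauerMoment_eq_zero_of_lt (by linarith) (by omega : m < n),
      mul_zero]

lemma integral_rpow_mul_one_sub_rpow {a b : ℝ} (ha : 0 < a) (hb : 0 < b) :
    ∫ x in (0 : ℝ)..1, x ^ (a - 1) * (1 - x) ^ (b - 1) = Gamma a * Gamma b / Gamma (a + b) := by
  have hbeta : Complex.betaIntegral a b
      = ((∫ x in (0 : ℝ)..1, x ^ (a - 1) * (1 - x) ^ (b - 1) : ℝ) : ℂ) := by
    rw [Complex.betaIntegral, ← intervalIntegral.integral_ofReal]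
    refine intervalIntegral.integral_congr fun x hx => ?_
    rw [Set.uIcc_of_le zero_le_one] at hx
    simp only [Complex.ofReal_mul, Complex.ofReal_cpow hx.1,
      Complex.ofReal_cpow (sub_nonneg.2 hx.2)]
    push_cast
    ring
  rw [← ProbabilityTheory.beta, ProbabilityTheory.beta_eq_betaIntegralReal a b ha hb, hbeta,
    Complex.ofReal_re]

lemma integral_one_sub_sq_rpow {ν : ℝ} (hν : -1 < ν) :
    ∫ t in (-1 : ℝ)..1, (1 - t ^ 2) ^ ν
      = 2 ^ (2 * ν + 1) * Gamma (ν + 1) ^ 2 / Gamma (2 * ν + 2) := by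
  have hsub : ∫ t in (-1 : ℝ)..1, (1 - t ^ 2) ^ ν
      = 2 * ∫ x in (0 : ℝ)..1, (1 - (2 * x - 1) ^ 2) ^ ν := by
    rw [intervalIntegral.integral_comp_mul_sub (fun t => (1 - t ^ 2) ^ ν) two_ne_zero 1]
    norm_num
    ring
  have hbeta : ∫ x in (0 : ℝ)..1, (1 - (2 * x - 1) ^ 2) ^ ν
      = 4 ^ ν * ∫ x in (0 : ℝ)..1, x ^ (ν + 1 - 1) * (1 - x) ^ (ν + 1 - 1) := by
    rw [← intervalIntegral.integral_const_mul]
    refine intervalIntegral.integral_congr fun x hx => ?_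
    rw [Set.uIcc_of_le zero_le_one] at hx
    simp only [add_sub_cancel_right]
    rw [show 1 - (2 * x - 1) ^ 2 = 4 * (x * (1 - x)) by ring,
      mul_rpow (by norm_num) (mul_nonneg hx.1 (sub_nonneg.2 hx.2)),
      mul_rpow hx.1 (sub_nonneg.2 hx.2)]
  rw [hsub, hbeta, integral_rpow_mul_one_sub_rpow (by linarith) (by linarith),
    show (4 : ℝ) = 2 ^ (2 : ℝ) by norm_num, ← rpow_mul zero_le_two, rpow_add two_pos,
    rpow_one]
  ring_nf

lemma gegenbauerMoment_zero_zero {lam : ℝ} (hlam : 0 < lam) :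
    gegenbauerMoment lam 0 0
      = π * Gamma (2 * lam) / (2 ^ (2 * lam - 1) * Gamma lam * Gamma (lam + 1)) := by
  have hw : gegenbauerMoment lam 0 0 = ∫ t in (-1 : ℝ)..1, (1 - t ^ 2) ^ (lam - 1 / 2) := by
    simp [gegenbauerMoment, gegenbauer_zero (Gamma_pos_of_pos hlam).ne']
  have hdup := Gamma_mul_Gamma_add_half_of_pos hlam
  have hpow : (2 : ℝ) ^ (2 * lam) = 2 ^ (2 * lam - 1) * 2 := by
    rw [← rpow_add_one two_ne_zero]; ring_nf
  have hpow' : (2 : ℝ) ^ (1 - 2 * lam) * 2 ^ (2 * lam - 1) = 1 := by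
    rw [← rpow_add two_pos]; norm_num
  have hπ : √π ^ 2 = π := sq_sqrt pi_pos.le
  have hΓ := (Gamma_pos_of_pos hlam).ne'
  have hΓ2 := (Gamma_pos_of_pos (by linarith : 0 < 2 * lam)).ne'
  rw [hw, integral_one_sub_sq_rpow (by linarith), show 2 * (lam - 1 / 2) + 1 = 2 * lam by ring,
    show lam - 1 / 2 + 1 = lam + 1 / 2 by ring, show 2 * (lam - 1 / 2) + 2 = 2 * lam + 1 by ring,
    Gamma_add_one (by positivity), Gamma_add_one hlam.ne', hpow]
  set B := Gamma (lam + 1 / 2)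
  field_simp
  linear_combination ((2 : ℝ) ^ (2 * lam - 1)) ^ 2 *
      (Gamma lam * B + Gamma (2 * lam) * 2 ^ (1 - 2 * lam) * √π) * hdup
    + (2 ^ (2 * lam - 1) * Gamma (2 * lam) * 2 ^ (1 - 2 * lam)) ^ 2 * hπ
    + Gamma (2 * lam) ^ 2 * π * (2 ^ (1 - 2 * lam) * 2 ^ (2 * lam - 1) + 1) * hpow'

lemma gegenbauerMoment_self {lam : ℝ} (hlam : 0 < lam) (n : ℕ) :
    gegenbauerMoment lam n n
      = π * Gamma (n + 2 * lam) / (2 ^ (2 * lam + n - 1) * Gamma lam * Gamma (lam + n + 1)) := by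
  induction n generalizing lam with
  | zero => simpa using gegenbauerMoment_zero_zero hlam
  | succ n ih =>
    have hrec := gegenbauerMoment_succ hlam n (n + 1)
    rw [Nat.add_sub_cancel, ih (by linarith)] at hrec
    have hc : ((n : ℝ) + 1) * (n + 1 + 2 * lam) ≠ 0 := by positivity
    refine mul_left_cancel₀ hc (hrec.trans ?_)
    have hpos : 0 < (n : ℝ) + 1 + 2 * lam := by positivity
    rw [show (n : ℝ) + 2 * (lam + 1) = n + 1 + 2 * lam + 1 by ring, Gamma_add_one hpos.ne',
      show 2 * (lam + 1) + n - 1 = 2 * lam + ((n + 1 : ℕ) : ℝ) - 1 + 1 by push_cast; ring,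
      rpow_add_one two_ne_zero, Gamma_add_one hlam.ne',
      show lam + 1 + n + 1 = lam + ((n + 1 : ℕ) : ℝ) + 1 by push_cast; ring]
    have hΓ := (Gamma_pos_of_pos hlam).ne'
    field_simp
    push_cast
    ring

lemma integral_mul_gegenbauer_mul_gegenbauer_succ {lam : ℝ} (hlam : 0 < lam) (l : ℕ) :
    ∫ t in (-1 : ℝ)..1,
        t * gegenbauer lam l t * gegenbauer lam (l + 1) t * (1 - t ^ 2) ^ (lam - 1 / 2)
      = gegenbauerCoeff lam l 0 * 2 ^ l * gegenbauerMoment lam (l + 1) (l + 1) := by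
  have hexpand : ∀ t : ℝ,
      t * gegenbauer lam l t * gegenbauer lam (l + 1) t * (1 - t ^ 2) ^ (lam - 1 / 2)
        = ∑ k ∈ Finset.range (l / 2 + 1), gegenbauerCoeff lam l k * 2 ^ (l - 2 * k) *
          (t ^ (l - 2 * k + 1) * gegenbauer lam (l + 1) t * (1 - t ^ 2) ^ (lam - 1 / 2)) := by
    intro t
    rw [gegenbauer_eq_sum_range lam le_rfl t, Finset.mul_sum, Finset.sum_mul, Finset.sum_mul]
    exact Finset.sum_congr rfl fun k _ => by ring
  have hint : ∀ p : ℕ, IntervalIntegrable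
      (fun t : ℝ => t ^ p * gegenbauer lam (l + 1) t * (1 - t ^ 2) ^ (lam - 1 / 2))
      volume (-1) 1 :=
    fun p => (intervalIntegrable_one_sub_sq_rpow (by linarith)).continuousOn_mul
      ((continuous_pow p).mul (continuous_gegenbauer lam (l + 1))).continuousOn
  simp_rw [hexpand]
  rw [intervalIntegral.integral_finsetSum fun k _ => (hint _).const_mul _,
    Finset.sum_eq_single_of_mem 0 (by simp)]
  · rw [intervalIntegral.integral_const_mul]
    rfl
  · intro k hk hk0
    rw [Finset.mem_range] at hk
    rw [intervalIntegral.integral_const_mul]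
    exact mul_eq_zero_of_right _ (gegenbauerMoment_eq_zero_of_lt hlam (by omega))

theorem gegenbauer_weighted_t_integral (lam : ℝ) (hlam : 0 < lam) (l : ℕ) :
    ∫ t in (-1 : ℝ)..1,
        t * gegenbauer lam l t * gegenbauer lam (l + 1) t * (1 - t ^ 2) ^ (lam - 1 / 2 : ℝ) =
      Real.pi * Real.Gamma ((l : ℝ) + 2 * lam + 1) /
        ((2 : ℝ) ^ (2 * lam : ℝ) * (Nat.factorial l) * ((l : ℝ) + lam) *
          ((l : ℝ) + lam + 1) * Real.Gamma lam ^ 2) := by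
  rw [integral_mul_gegenbauer_mul_gegenbauer_succ hlam, gegenbauerMoment_self hlam,
    gegenbauerCoeff_zero]
  have hl : 0 < lam + l := by positivity
  rw [show lam + ((l + 1 : ℕ) : ℝ) + 1 = lam + l + 1 + 1 by push_cast; ring,
    Gamma_add_one (by positivity), Gamma_add_one hl.ne',
    show 2 * lam + ((l + 1 : ℕ) : ℝ) - 1 = 2 * lam + l by push_cast; ring,
    show ((l + 1 : ℕ) : ℝ) + 2 * lam = l + 2 * lam + 1 by push_cast; ring,
    rpow_add two_pos, rpow_natCast]
  have hΓ := (Gamma_pos_of_pos hlam).ne'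
  have hΓl := (Gamma_pos_of_pos hl).ne'
  field_simp
  ring
end

section
/- For μ ≥ 3 and m ∈ ℕ₀, the series S_m^μ(ρ) = ∑_{l=0}^∞ binom(l+μ, l) l^m e^{-2ρl} has, as ρ → 0⁺, the leading asymptotic behavior S_m^μ(ρ) = (μ+m)!/(2^{μ+m+1} μ! ρ^{μ+m+1}) + O(ρ^{-μ-m}). -/
open Real Asymptotics

lemma exists_coeffs (μ : ℕ) : ∀ m : ℕ, ∃ c : ℕ → ℝ,
    c (μ + m) = (Nat.factorial (μ + m) : ℝ) / (Nat.factorial μ : ℝ) ∧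
    (∀ k, μ + m < k → c k = 0) ∧
    ∀ l : ℕ, ((l + μ).choose μ : ℝ) * (l : ℝ) ^ m =
      ∑ k ∈ Finset.range (μ + m + 1), c k * ((l + k).choose k : ℝ) := by
  intro m
  induction m with
  | zero =>
    have hf : (Nat.factorial μ : ℝ) ≠ 0 := Nat.cast_ne_zero.2 (Nat.factorial_ne_zero μ)
    refine ⟨fun k => if k = μ then 1 else 0, by simp [(div_self hf).symm],
      fun k hk => by simp only [if_neg (by omega : ¬ k = μ)], fun l => ?_⟩
    simp [ite_mul, Finset.sum_ite_eq', Nat.lt_succ_self]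
  | succ m ih =>
    obtain ⟨c, htop, hzero, hc⟩ := ih
    refine ⟨fun j => (j : ℝ) * (if j = 0 then 0 else c (j-1)) - ((j:ℝ)+1) * c j, ?_, ?_, ?_⟩
    · have h1 : μ + (m+1) ≠ 0 := by omega
      have h2 : μ + (m+1) - 1 = μ + m := by omega
      beta_reduce
      rw [if_neg h1, h2, htop, hzero (μ + (m+1)) (by omega), mul_zero, sub_zero,
        show μ + (m+1) = (μ+m)+1 from rfl, Nat.factorial_succ]
      push_cast
      field_simp
    · intro k hk
      have h1 : k ≠ 0 := by omega
      beta_reduce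
      rw [if_neg h1, hzero k (by omega), hzero (k-1) (by omega), mul_zero, mul_zero, sub_zero]
    · intro l
      have key : ∀ k : ℕ, (l : ℝ) * ((l + k).choose k : ℝ) =
          ((k:ℝ)+1) * ((l + k + 1).choose (k+1) : ℝ) - ((k:ℝ)+1) * ((l + k).choose k : ℝ) := by
        intro k
        have h := Nat.add_one_mul_choose_eq (l + k) k
        have h' : ((l + k + 1 : ℕ) : ℝ) * ((l + k).choose k : ℝ) =
            ((l + k + 1).choose (k + 1) : ℝ) * ((k:ℝ) + 1) := by exact_mod_cast h
        push_cast at h' ⊢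
        linarith
      have step1 : ((l + μ).choose μ : ℝ) * (l : ℝ) ^ (m+1)
          = ∑ k ∈ Finset.range (μ+m+1),
              (((k:ℝ)+1) * c k * ((l + k + 1).choose (k+1) : ℝ)
                - ((k:ℝ)+1) * c k * ((l + k).choose k : ℝ)) := by
        rw [pow_succ, ← mul_assoc, hc l, Finset.sum_mul]
        refine Finset.sum_congr rfl fun k _ => ?_
        rw [mul_assoc, mul_comm ((((l+k).choose k) : ℝ)) (l:ℝ), key k]
        ring
      rw [step1, Finset.sum_sub_distrib]
      have reA : ∑ k ∈ Finset.range (μ+m+1), ((k:ℝ)+1) * c k * ((l + k + 1).choose (k+1) : ℝ)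
          = ∑ j ∈ Finset.range (μ+(m+1)+1),
              ((j:ℝ) * (if j = 0 then 0 else c (j-1))) * ((l + j).choose j : ℝ) := by
        rw [show μ+(m+1)+1 = (μ+m+1)+1 from rfl,
          Finset.sum_range_succ' (fun j => ((j:ℝ) * (if j = 0 then 0 else c (j-1))) * ((l + j).choose j : ℝ)) (μ+m+1)]
        simp only [Nat.cast_zero, zero_mul, add_zero]
        refine Finset.sum_congr rfl fun k _ => ?_
        rw [if_neg (Nat.succ_ne_zero k)]
        simp only [Nat.add_sub_cancel]
        push_cast
        ring
      have reB : ∑ k ∈ Finset.range (μ+m+1), ((k:ℝ)+1) * c k * ((l + k).choose k : ℝ)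
          = ∑ j ∈ Finset.range (μ+(m+1)+1), (((j:ℝ)+1) * c j) * ((l + j).choose j : ℝ) := by
        rw [show μ+(m+1)+1 = (μ+m+1)+1 from rfl,
          Finset.sum_range_succ (fun j => (((j:ℝ)+1) * c j) * ((l + j).choose j : ℝ)) (μ+m+1),
          hzero (μ+m+1) (by omega)]
        simp
      rw [reA, reB, ← Finset.sum_sub_distrib]
      refine Finset.sum_congr rfl fun j _ => ?_
      ring

lemma S_eq (μ m : ℕ) (c : ℕ → ℝ)
    (hc : ∀ l : ℕ, ((l + μ).choose μ : ℝ) * (l : ℝ) ^ m =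
      ∑ k ∈ Finset.range (μ + m + 1), c k * ((l + k).choose k : ℝ))
    {ρ : ℝ} (hρ : 0 < ρ) :
    ∑' l : ℕ, (Nat.choose (l + μ) l : ℝ) * (l : ℝ) ^ m * Real.exp (-2 * ρ * l)
      = ∑ k ∈ Finset.range (μ + m + 1),
          c k * (1 / (1 - Real.exp (-(2 * ρ))) ^ (k + 1)) := by
  set x := Real.exp (-(2 * ρ)) with hxdef
  have hx0 : 0 < x := Real.exp_pos _
  have hx1 : x < 1 := Real.exp_lt_one_iff.2 (by linarith)
  have hxn : ‖x‖ < 1 := by rw [Real.norm_eq_abs, abs_of_pos hx0]; exact hx1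
  have hterm : ∀ l : ℕ, (Nat.choose (l + μ) l : ℝ) * (l : ℝ) ^ m * Real.exp (-2 * ρ * l)
      = ∑ k ∈ Finset.range (μ + m + 1), c k * (((l + k).choose k : ℝ) * x ^ l) := by
    intro l
    have e1 : Real.exp (-2 * ρ * l) = x ^ l := by
      rw [hxdef, ← Real.exp_nat_mul]
      congr 1
      ring
    rw [e1, Nat.choose_symm_add, hc l, Finset.sum_mul]
    exact Finset.sum_congr rfl fun k _ => by ring
  rw [tsum_congr hterm,
    Summable.tsum_finsetSum (fun k _ => ((summable_choose_mul_geometric_of_norm_lt_one k hxn).mul_left (c k)))]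
  refine Finset.sum_congr rfl fun k _ => ?_
  rw [tsum_mul_left, tsum_choose_mul_geometric_of_norm_lt_one k hxn]

lemma aux_pow (a b : ℝ) (ha : 0 ≤ a) (hab : a ≤ b) :
    ∀ s : ℕ, b ^ (s + 1) - a ^ (s + 1) ≤ (s + 1 : ℝ) * b ^ s * (b - a) := by
  intro s
  induction s with
  | zero => simp
  | succ s ih =>
    have hb : 0 ≤ b := ha.trans hab
    have h1 : a ^ (s + 1) ≤ b ^ (s + 1) := pow_le_pow_left₀ ha hab _
    have hpow : b ^ s * b = b ^ (s + 1) := (pow_succ b s).symm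
    have h2 : b * (b ^ (s + 1) - a ^ (s + 1)) ≤ b * ((s + 1 : ℝ) * b ^ s * (b - a)) :=
      mul_le_mul_of_nonneg_left ih hb
    have heq : b * ((s + 1 : ℝ) * b ^ s * (b - a)) = (s + 1 : ℝ) * b ^ (s + 1) * (b - a) := by
      rw [← hpow]; ring
    have h3 : a ^ (s + 1) * (b - a) ≤ b ^ (s + 1) * (b - a) :=
      mul_le_mul_of_nonneg_right h1 (sub_nonneg.2 hab)
    rw [pow_succ b (s + 1), pow_succ a (s + 1)]
    push_cast
    nlinarith [h2, heq, h3]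

theorem S_m_mu_asymptotics (m μ : ℕ) (hμ : 3 ≤ μ) :
    (fun ρ : ℝ =>
        (∑' l : ℕ, (Nat.choose (l + μ) l : ℝ) * (l : ℝ) ^ m * Real.exp (-2 * ρ * l)) -
          (Nat.factorial (μ + m) : ℝ) /
            (2 ^ (μ + m + 1) * (Nat.factorial μ : ℝ) * ρ ^ (μ + m + 1)))
      =O[nhdsWithin 0 (Set.Ioi 0)] fun ρ : ℝ => (ρ ^ (μ + m))⁻¹ := by
  obtain ⟨c, htop, hzero, hc⟩ := exists_coeffs μ m
  rw [isBigO_iff]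
  refine ⟨(∑ k ∈ Finset.range (μ+m+1), |c k|) + |c (μ+m)| * (2 * ((μ+m : ℕ) + 1)), ?_⟩
  filter_upwards [Ioo_mem_nhdsGT_of_mem (Set.left_mem_Ico.2 (by norm_num : (0:ℝ) < 1/2))]
    with ρ hmem
  obtain ⟨h0, hhalf⟩ := hmem
  set a := 1 - Real.exp (-(2*ρ)) with hadef
  have hexp1 : -(2*ρ) + 1 ≤ Real.exp (-(2*ρ)) := Real.add_one_le_exp _
  have hexp2 : 2*ρ + 1 ≤ Real.exp (2*ρ) := Real.add_one_le_exp _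
  have hprod : Real.exp (-(2*ρ)) * Real.exp (2*ρ) = 1 := by
    rw [← Real.exp_add]; simp
  have ha2 : a ≤ 2*ρ := by rw [hadef]; linarith
  have haρ : ρ ≤ a := by
    rw [hadef]
    nlinarith [Real.exp_pos (-(2*ρ))]
  have ha0 : 0 < a := lt_of_lt_of_le h0 haρ
  have hdiff : 2*ρ - a ≤ 4*ρ^2 := by
    have habs : |Real.exp (-(2*ρ)) - 1 - (-(2*ρ))| ≤ (-(2*ρ))^2 :=
      Real.abs_exp_sub_one_sub_id_le (by rw [abs_neg, abs_of_pos (by linarith)]; linarith)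
    have h' := (abs_le.1 habs).2
    rw [hadef]; nlinarith
  have hρ1 : ρ ≤ 1 := by linarith
  have hρn : (0:ℝ) < ρ ^ (μ+m) := pow_pos h0 _
  rw [S_eq μ m c hc h0]
  have hfμ : (Nat.factorial μ : ℝ) ≠ 0 := Nat.cast_ne_zero.2 (Nat.factorial_ne_zero μ)
  have hconst : (Nat.factorial (μ + m) : ℝ) /
        (2 ^ (μ + m + 1) * (Nat.factorial μ : ℝ) * ρ ^ (μ + m + 1))
      = c (μ+m) * (1 / (2*ρ) ^ (μ+m+1)) := by
    rw [htop, mul_pow]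
    field_simp
  rw [hconst, Finset.sum_range_succ]
  have hbound1 : |∑ k ∈ Finset.range (μ+m), c k * (1 / a^(k+1))|
      ≤ (∑ k ∈ Finset.range (μ+m+1), |c k|) * (ρ^(μ+m))⁻¹ := by
    calc |∑ k ∈ Finset.range (μ+m), c k * (1 / a^(k+1))|
        ≤ ∑ k ∈ Finset.range (μ+m), |c k * (1 / a^(k+1))| := Finset.abs_sum_le_sum_abs _ _
      _ ≤ ∑ k ∈ Finset.range (μ+m), |c k| * (ρ^(μ+m))⁻¹ := by
          refine Finset.sum_le_sum fun k hk => ?_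
          rw [abs_mul]
          refine mul_le_mul_of_nonneg_left ?_ (abs_nonneg _)
          have hk' : k + 1 ≤ μ + m := Finset.mem_range.1 hk
          have e1 : ρ ^ (μ+m) ≤ ρ ^ (k+1) := pow_le_pow_of_le_one h0.le hρ1 hk'
          have e2 : ρ ^ (k+1) ≤ a ^ (k+1) := pow_le_pow_left₀ h0.le haρ _
          rw [abs_of_pos (by positivity : (0:ℝ) < 1 / a^(k+1)), one_div]
          exact inv_anti₀ hρn (le_trans e1 e2)
      _ = (∑ k ∈ Finset.range (μ+m), |c k|) * (ρ^(μ+m))⁻¹ := (Finset.sum_mul _ _ _).symm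
      _ ≤ (∑ k ∈ Finset.range (μ+m+1), |c k|) * (ρ^(μ+m))⁻¹ := by
          refine mul_le_mul_of_nonneg_right ?_ (inv_nonneg.2 hρn.le)
          exact Finset.sum_le_sum_of_subset_of_nonneg
            (Finset.range_subset_range.2 (by omega)) (fun i _ _ => abs_nonneg _)
  have hbound2 : |c (μ+m) * (1 / a^(μ+m+1)) - c (μ+m) * (1 / (2*ρ)^(μ+m+1))|
      ≤ |c (μ+m)| * (2 * ((μ+m : ℕ) + 1)) * (ρ^(μ+m))⁻¹ := by
    rw [← mul_sub, abs_mul, mul_assoc]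
    refine mul_le_mul_of_nonneg_left ?_ (abs_nonneg _)
    have h2ρ : (0:ℝ) < 2*ρ := by linarith
    have hA : (0:ℝ) < a^(μ+m+1) := pow_pos ha0 _
    have hB : (0:ℝ) < (2*ρ)^(μ+m+1) := pow_pos h2ρ _
    have hle : a^(μ+m+1) ≤ (2*ρ)^(μ+m+1) := pow_le_pow_left₀ ha0.le ha2 _
    have hmono : 1 / (2*ρ)^(μ+m+1) ≤ 1 / a^(μ+m+1) :=
      one_div_le_one_div_of_le hA hle
    rw [abs_of_nonneg (sub_nonneg.2 hmono),
      div_sub_div _ _ (ne_of_gt hA) (ne_of_gt hB), one_mul, mul_one]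
    have hnum : (2*ρ)^(μ+m+1) - a^(μ+m+1)
        ≤ ((μ+m : ℕ) + 1 : ℝ) * (2*ρ)^(μ+m) * (4*ρ^2) := by
      refine le_trans (aux_pow a (2*ρ) ha0.le ha2 (μ+m)) ?_
      exact mul_le_mul_of_nonneg_left hdiff (by positivity)
    have hden : ρ^(μ+m+1) * (2*ρ)^(μ+m+1) ≤ a^(μ+m+1) * (2*ρ)^(μ+m+1) :=
      mul_le_mul_of_nonneg_right (pow_le_pow_left₀ h0.le haρ _) hB.le
    calc ((2*ρ)^(μ+m+1) - a^(μ+m+1)) / (a^(μ+m+1) * (2*ρ)^(μ+m+1))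
        ≤ (((μ+m : ℕ) + 1 : ℝ) * (2*ρ)^(μ+m) * (4*ρ^2)) / (ρ^(μ+m+1) * (2*ρ)^(μ+m+1)) :=
          div_le_div₀ (by positivity) hnum (by positivity) hden
      _ = 2 * ((μ+m : ℕ) + 1) * (ρ^(μ+m))⁻¹ := by
          rw [mul_pow, mul_pow]
          field_simp
          ring
  rw [Real.norm_eq_abs, Real.norm_eq_abs, abs_of_pos (inv_pos.2 hρn)]
  calc |∑ k ∈ Finset.range (μ+m), c k * (1 / a^(k+1)) + c (μ+m) * (1 / a^(μ+m+1))
          - c (μ+m) * (1 / (2*ρ)^(μ+m+1))|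
      ≤ |∑ k ∈ Finset.range (μ+m), c k * (1 / a^(k+1))|
        + |c (μ+m) * (1 / a^(μ+m+1)) - c (μ+m) * (1 / (2*ρ)^(μ+m+1))| := by
        rw [add_sub_assoc]; exact abs_add_le _ _
    _ ≤ (∑ k ∈ Finset.range (μ+m+1), |c k|) * (ρ^(μ+m))⁻¹
        + |c (μ+m)| * (2 * ((μ+m : ℕ) + 1)) * (ρ^(μ+m))⁻¹ := add_le_add hbound1 hbound2
    _ = ((∑ k ∈ Finset.range (μ+m+1), |c k|) + |c (μ+m)| * (2 * ((μ+m : ℕ) + 1)))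
          * (ρ^(μ+m))⁻¹ := by ring
end

section
/- Let F ∈ C¹(S^n) be non-zero. Then the uncertainty inequality holds: [‖F‖₂² - |⟨x·F, F⟩|²/‖F‖₂²]^{1/2} · ‖∇_{S^n} F‖₂ ≥ (n/2)·|⟨x·F, F⟩|, where ⟨x·F, F⟩ = ∫_{S^n} x |F(x)|² dσ(x) ∈ ℝ^{n+1} and |·| denotes its Euclidean norm; equivalently, U(F) ≥ n/2 whenever ξ_O(F) ≠ 0. -/
/-!
Write `ξ = ∫ F² x dμ`. Differentiating the rotation invariance of `μ` along the one-parameter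
groups `exp (t A)` of the plane rotations `A x = ⟪bᵢ, x⟫ w - ⟪w, x⟫ bᵢ`, applied to `F² ⟪bᵢ, ·⟫`
and summed over an orthonormal basis `(bᵢ)`, gives `n ⟪w, ξ⟫ = 2 ∫ F dF(w - ⟪w, x⟫ x) dμ`:
the tangential part of the constant field `w` has divergence `-n ⟪w, x⟫` on `Sⁿ`.
Take `w = ξ`. Pointwise `‖ξ - ⟪ξ, x⟫ x‖ ≤ ‖ξ‖ ‖x - ξ / ‖F‖₂²‖`, so Cauchy–Schwarz bounds the right
side by `2 ‖ξ‖ (∫ F² ‖x - ξ / ‖F‖₂²‖² dμ)^{1/2} ‖∇F‖₂`, and that integral is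
`‖F‖₂² - ‖ξ‖² / ‖F‖₂²`.
-/

open MeasureTheory Metric InnerProductSpace Module
open scoped RealInnerProductSpace

noncomputable section

theorem integral_mul_le_sqrt_mul_sqrt {α : Type*} [MeasurableSpace α] {μ : Measure α}
    {f g : α → ℝ} (hf0 : 0 ≤ᵐ[μ] f) (hg0 : 0 ≤ᵐ[μ] g) (hf : MemLp f 2 μ) (hg : MemLp g 2 μ) :
    ∫ a, f a * g a ∂μ ≤ √(∫ a, f a ^ 2 ∂μ) * √(∫ a, g a ^ 2 ∂μ) := by
  simpa [Real.sqrt_eq_rpow] using integral_mul_le_Lp_mul_Lq_of_nonneg Real.HolderConjugate.two_two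
    hf0 hg0 (by simpa using hf) (by simpa using hg)

theorem Continuous.integrable_of_compactSpace {X F : Type*} [TopologicalSpace X]
    [CompactSpace X] [MeasurableSpace X] [OpensMeasurableSpace X] [NormedAddCommGroup F]
    {μ : Measure X} [IsFiniteMeasure μ] {f : X → F} (hf : Continuous f) : Integrable f μ :=
  hf.integrable_of_hasCompactSupport (.of_compactSpace f)

section InnerProductSpace

variable {E : Type*} [NormedAddCommGroup E] [InnerProductSpace ℝ E]

def planeRotationGenerator (u v : E) : E →L[ℝ] E :=
  rankOne ℝ u v - rankOne ℝ v u

theorem planeRotationGenerator_apply (u v x : E) :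
    planeRotationGenerator u v x = ⟪v, x⟫ • u - ⟪u, x⟫ • v :=
  rfl

theorem planeRotationGenerator_mem_skewAdjoint [CompleteSpace E] (u v : E) :
    planeRotationGenerator u v ∈ skewAdjoint (E →L[ℝ] E) := by
  simp [skewAdjoint.mem_iff, planeRotationGenerator, ContinuousLinearMap.star_eq_adjoint]

theorem OrthonormalBasis.sum_inner_smul_planeRotationGenerator {ι : Type*} [Fintype ι]
    (b : OrthonormalBasis ι ℝ E) (w x : E) :
    ∑ i, ⟪b i, x⟫ • planeRotationGenerator w (b i) x = ‖x‖ ^ 2 • w - ⟪w, x⟫ • x := by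
  have hx : ∑ i, ⟪b i, x⟫ * ⟪b i, x⟫ = ‖x‖ ^ 2 := by
    simpa only [real_inner_comm x, real_inner_self_eq_norm_sq] using b.sum_inner_mul_inner x x
  simp_rw [planeRotationGenerator_apply, smul_sub, Finset.sum_sub_distrib, smul_smul,
    ← Finset.sum_smul, hx, ← smul_smul, smul_comm _ ⟪w, x⟫, ← Finset.smul_sum, b.sum_repr']

theorem OrthonormalBasis.sum_inner_planeRotationGenerator {ι : Type*} [Fintype ι]
    (b : OrthonormalBasis ι ℝ E) (w x : E) :
    ∑ i, ⟪b i, planeRotationGenerator w (b i) x⟫ = (1 - Fintype.card ι) * ⟪w, x⟫ := by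
  have hxw : ∑ i, ⟪b i, x⟫ * ⟪b i, w⟫ = ⟪w, x⟫ := by
    rw [real_inner_comm, ← b.sum_inner_mul_inner x w]
    simp only [real_inner_comm x]
  simp only [planeRotationGenerator_apply, inner_sub_right, inner_smul_right,
    Finset.sum_sub_distrib, hxw, real_inner_self_eq_norm_sq, b.orthonormal.1, Finset.sum_const,
    one_pow, mul_one, Finset.card_univ, nsmul_eq_mul]
  ring

theorem norm_sub_inner_smul_le_mul_norm_sub {x : E} (hx : ‖x‖ = 1) (ξ : E) (s : ℝ) :
    ‖ξ - ⟪ξ, x⟫ • x‖ ≤ ‖ξ‖ * ‖x - s • ξ‖ := by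
  refine le_of_pow_le_pow_left₀ two_ne_zero (by positivity) ?_
  rw [mul_pow, norm_sub_sq_real, norm_sub_sq_real, norm_smul, norm_smul, inner_smul_right,
    inner_smul_right, hx, Real.norm_eq_abs, Real.norm_eq_abs, mul_pow, mul_pow, sq_abs, sq_abs,
    real_inner_comm x ξ]
  nlinarith [sq_nonneg (⟪x, ξ⟫ - s * ‖ξ‖ ^ 2)]

theorem fderiv_sq_mul_inner_apply {F : E → ℝ} {x : E} (hF : DifferentiableAt ℝ F x) (v h : E) :
    fderiv ℝ (fun y => F y ^ 2 * ⟪v, y⟫) x h =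
      2 * F x * fderiv ℝ F x h * ⟪v, x⟫ + F x ^ 2 * ⟪v, h⟫ := by
  have hd : HasFDerivAt (fun y => F y ^ 2 * ⟪v, y⟫) _ x :=
    (hF.hasFDerivAt.pow 2).fun_mul (innerSL ℝ v).hasFDerivAt
  rw [hd.fderiv]
  simp
  ring

theorem hasDerivAt_exp_smul_apply [CompleteSpace E] (A : E →L[ℝ] E) (x : E) (t : ℝ) :
    HasDerivAt (fun s : ℝ => NormedSpace.exp (s • A) x) (NormedSpace.exp (t • A) (A x)) t := by
  simpa using (hasDerivAt_exp_smul_const A t).clm_apply (hasDerivAt_const t x)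

theorem exp_smul_mem_unitary [CompleteSpace E] {A : E →L[ℝ] E}
    (hA : A ∈ skewAdjoint (E →L[ℝ] E)) (t : ℝ) :
    NormedSpace.exp (t • A) ∈ unitary (E →L[ℝ] E) := by
  let +nondep : NormedAlgebra ℚ (E →L[ℝ] E) := .restrictScalars ℚ ℝ _
  exact NormedSpace.exp_mem_unitary_of_mem_skewAdjoint (skewAdjoint.smul_mem t hA)

def expSmulLinearIsometryEquiv [CompleteSpace E] {A : E →L[ℝ] E}
    (hA : A ∈ skewAdjoint (E →L[ℝ] E)) (t : ℝ) : E ≃ₗᵢ[ℝ] E :=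
  Unitary.linearIsometryEquiv ⟨_, exp_smul_mem_unitary hA t⟩

theorem expSmulLinearIsometryEquiv_apply [CompleteSpace E] {A : E →L[ℝ] E}
    (hA : A ∈ skewAdjoint (E →L[ℝ] E)) (t : ℝ) (x : E) :
    expSmulLinearIsometryEquiv hA t x = NormedSpace.exp (t • A) x :=
  rfl

end InnerProductSpace

section Sphere

variable {E : Type*} [NormedAddCommGroup E]

theorem ContinuousOn.comp_sphere_val {X : Type*} [TopologicalSpace X] {f : E → X}
    (hf : ContinuousOn f {0}ᶜ) : Continuous fun x : sphere (0 : E) 1 => f x :=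
  hf.comp_continuous continuous_subtype_val fun x => ne_zero_of_mem_unit_sphere x

theorem ContDiffOn.differentiableAt_of_mem_sphere [NormedSpace ℝ E] {f : E → ℝ}
    (hf : ContDiffOn ℝ 1 f {0}ᶜ) (x : sphere (0 : E) 1) : DifferentiableAt ℝ f x :=
  (hf.differentiableOn one_ne_zero).differentiableAt
    (isOpen_compl_singleton.mem_nhds (ne_zero_of_mem_unit_sphere x))

theorem ContDiffOn.continuous_fderiv_comp_sphere_val [NormedSpace ℝ E] {f : E → ℝ}
    (hf : ContDiffOn ℝ 1 f {0}ᶜ) : Continuous fun x : sphere (0 : E) 1 => fderiv ℝ f x :=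
  (hf.continuousOn_fderiv_of_isOpen isOpen_compl_singleton le_rfl).comp_sphere_val

variable [InnerProductSpace ℝ E] [MeasurableSpace E] [BorelSpace E]

def IsIsometryInvariant (μ : Measure (sphere (0 : E) 1)) : Prop :=
  ∀ g : E ≃ₗᵢ[ℝ] E,
    μ.map (fun x : sphere (0 : E) 1 => (⟨g x, by simp⟩ : sphere (0 : E) 1)) = μ

variable {μ : Measure (sphere (0 : E) 1)}

theorem IsIsometryInvariant.integral_comp (hμ : IsIsometryInvariant μ) (g : E ≃ₗᵢ[ℝ] E)
    {f : E → ℝ} (hf : ContinuousOn f {0}ᶜ) :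
    ∫ x : sphere (0 : E) 1, f (g x) ∂μ = ∫ x : sphere (0 : E) 1, f x ∂μ := by
  have hg : Continuous fun x : sphere (0 : E) 1 => (⟨g x, by simp⟩ : sphere (0 : E) 1) :=
    (g.continuous.comp continuous_subtype_val).subtype_mk _
  conv_rhs => rw [← hμ g]
  rw [integral_map hg.aemeasurable hf.comp_sphere_val.aestronglyMeasurable]

variable [FiniteDimensional ℝ E] [IsFiniteMeasure μ]

theorem IsIsometryInvariant.integral_fderiv_apply_eq_zero (hμ : IsIsometryInvariant μ)
    {G : E → ℝ} (hG : ContDiffOn ℝ 1 G {0}ᶜ) {A : E →L[ℝ] E}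
    (hA : A ∈ skewAdjoint (E →L[ℝ] E)) :
    ∫ x : sphere (0 : E) 1, fderiv ℝ G x (A x) ∂μ = 0 := by
  let R := expSmulLinearIsometryEquiv hA
  have hRS : ∀ t (x : sphere (0 : E) 1), R t x ∈ sphere (0 : E) 1 := fun t x => by simp
  have hRne : ∀ t (x : sphere (0 : E) 1), R t x ∈ ({0}ᶜ : Set E) :=
    fun t x => ne_zero_of_mem_unit_sphere ⟨_, hRS t x⟩
  have hRcont : ∀ t, Continuous fun x : sphere (0 : E) 1 => R t x :=
    fun t => (R t).continuous.comp continuous_subtype_val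
  obtain ⟨M, hM⟩ := isCompact_univ.exists_bound_of_continuousOn
    hG.continuous_fderiv_comp_sphere_val.continuousOn
  have hbound : ∀ (x : sphere (0 : E) 1) t, ‖fderiv ℝ G (R t x) (R t (A x))‖ ≤ M * ‖A‖ := by
    intro x t
    have hGM := hM ⟨_, hRS t x⟩ (Set.mem_univ _)
    refine ((fderiv ℝ G (R t x)).le_opNorm _).trans <|
      mul_le_mul hGM ?_ (norm_nonneg _) ((norm_nonneg _).trans hGM)
    simpa using A.le_opNorm x
  obtain ⟨-, hD⟩ := hasDerivAt_integral_of_dominated_loc_of_deriv_le (μ := μ) (x₀ := 0)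
    (F := fun t (x : sphere (0 : E) 1) => G (R t x)) Filter.univ_mem
    (.of_forall fun t =>
      (hG.continuousOn.comp_continuous (hRcont t) (hRne t)).aestronglyMeasurable)
    (hG.continuousOn.comp_continuous (hRcont 0) (hRne 0)).integrable_of_compactSpace
    ((hG.continuousOn_fderiv_of_isOpen isOpen_compl_singleton le_rfl).comp_continuous
      (hRcont 0) (hRne 0) |>.clm_apply
      ((R 0).continuous.comp (A.continuous.comp continuous_subtype_val))).aestronglyMeasurable
    (.of_forall fun x t _ => hbound x t) (integrable_const _)
    (.of_forall fun x t _ =>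
      (hG.differentiableAt_of_mem_sphere ⟨_, hRS t x⟩).hasFDerivAt.comp_hasDerivAt t
        (hasDerivAt_exp_smul_apply A x t))
  have hconst : (fun t => ∫ x : sphere (0 : E) 1, G (R t x) ∂μ) = fun _ => ∫ x, G x ∂μ :=
    funext fun t => hμ.integral_comp (R t) hG.continuousOn
  rw [hconst] at hD
  simpa [R, expSmulLinearIsometryEquiv_apply] using hD.unique (hasDerivAt_const 0 _)

theorem IsIsometryInvariant.finrank_sub_one_mul_inner_integral_sq_smul
    (hμ : IsIsometryInvariant μ) {F : E → ℝ} (hF : ContDiffOn ℝ 1 F {0}ᶜ) (w : E) :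
    ((finrank ℝ E : ℝ) - 1) * ⟪w, ∫ x : sphere (0 : E) 1, F x ^ 2 • (x : E) ∂μ⟫ =
      2 * ∫ x : sphere (0 : E) 1, F x * fderiv ℝ F x (w - ⟪w, x⟫ • (x : E)) ∂μ := by
  let b := stdOrthonormalBasis ℝ E
  let G : Fin (finrank ℝ E) → E → ℝ := fun i y => F y ^ 2 * ⟪b i, y⟫
  let A : Fin (finrank ℝ E) → E →L[ℝ] E := fun i => planeRotationGenerator w (b i)
  have hG : ∀ i, ContDiffOn ℝ 1 (G i) {0}ᶜ :=
    fun i => (hF.pow 2).mul (innerSL ℝ (b i)).contDiff.contDiffOn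
  have hsum : ∀ x : sphere (0 : E) 1, ∑ i, fderiv ℝ (G i) x (A i x) =
      2 * (F x * fderiv ℝ F x (w - ⟪w, x⟫ • (x : E))) -
        ((finrank ℝ E : ℝ) - 1) * ⟪w, F x ^ 2 • (x : E)⟫ := by
    intro x
    have hsmul : ∑ i, 2 * F x * fderiv ℝ F x (A i x) * ⟪b i, x⟫ =
        2 * F x * fderiv ℝ F x (∑ i, ⟪b i, x⟫ • A i x) := by
      simp only [map_sum, map_smul, smul_eq_mul, Finset.mul_sum]
      exact Finset.sum_congr rfl fun i _ => by ring
    simp only [G, fderiv_sq_mul_inner_apply (hF.differentiableAt_of_mem_sphere x),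
      Finset.sum_add_distrib, hsmul, ← Finset.mul_sum]
    simp only [A, b.sum_inner_planeRotationGenerator, b.sum_inner_smul_planeRotationGenerator,
      norm_eq_of_mem_sphere, one_pow, one_smul, Fintype.card_fin, real_inner_smul_right]
    ring
  have hcont : Continuous fun x : sphere (0 : E) 1 => F x := hF.continuousOn.comp_sphere_val
  have hzero : ∫ x : sphere (0 : E) 1, (2 * (F x * fderiv ℝ F x (w - ⟪w, x⟫ • (x : E))) -
      ((finrank ℝ E : ℝ) - 1) * ⟪w, F x ^ 2 • (x : E)⟫) ∂μ = 0 := by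
    simp_rw [← hsum]
    rw [integral_finsetSum]
    · exact Finset.sum_eq_zero fun i _ =>
        hμ.integral_fderiv_apply_eq_zero (hG i) (planeRotationGenerator_mem_skewAdjoint _ _)
    · exact fun i _ => ((hG i).continuous_fderiv_comp_sphere_val.clm_apply
        ((A i).continuous.comp continuous_subtype_val)).integrable_of_compactSpace
  rw [integral_sub, integral_const_mul, integral_const_mul, integral_inner] at hzero
  · linarith
  · exact ((hcont.pow 2).smul continuous_subtype_val).integrable_of_compactSpace
  · exact (continuous_const.mul (hcont.mul
      (hF.continuous_fderiv_comp_sphere_val.clm_apply (by fun_prop)))).integrable_of_compactSpace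
  · exact (continuous_const.mul (continuous_const.inner
      ((hcont.pow 2).smul continuous_subtype_val))).integrable_of_compactSpace

theorem integral_mul_norm_sub_sq {f : sphere (0 : E) 1 → ℝ} (hf : Continuous f) (c : E) :
    ∫ x, f x * ‖(x : E) - c‖ ^ 2 ∂μ =
      ∫ x, f x ∂μ - 2 * ⟪c, ∫ x, f x • (x : E) ∂μ⟫ + ‖c‖ ^ 2 * ∫ x, f x ∂μ := by
  have hpoint : ∀ x : sphere (0 : E) 1, f x * ‖(x : E) - c‖ ^ 2 =
      f x - 2 * ⟪c, f x • (x : E)⟫ + ‖c‖ ^ 2 * f x := fun x => by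
    rw [norm_sub_sq_real, norm_eq_of_mem_sphere, inner_smul_right, real_inner_comm]
    ring
  simp_rw [hpoint]
  rw [integral_add, integral_sub, integral_const_mul, integral_const_mul, integral_inner]
  all_goals exact Continuous.integrable_of_compactSpace (by fun_prop)

theorem integral_mul_norm_sub_inv_smul_sq {f : sphere (0 : E) 1 → ℝ} (hf : Continuous f) :
    ∫ x, f x * ‖(x : E) - (∫ x, f x ∂μ)⁻¹ • ∫ x, f x • (x : E) ∂μ‖ ^ 2 ∂μ =
      ∫ x, f x ∂μ - ‖∫ x, f x • (x : E) ∂μ‖ ^ 2 / ∫ x, f x ∂μ := by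
  rw [integral_mul_norm_sub_sq hf]
  generalize ∫ x, f x ∂μ = I
  generalize ∫ x, f x • (x : E) ∂μ = ξ
  rw [real_inner_smul_left, real_inner_self_eq_norm_sq, norm_smul, norm_inv, Real.norm_eq_abs,
    mul_pow, inv_pow, sq_abs]
  rcases eq_or_ne I 0 with rfl | hI
  · simp
  · field_simp
    ring

theorem integral_mul_fderiv_apply_le {F : E → ℝ} (hF : ContDiffOn ℝ 1 F {0}ᶜ) (ξ : E) (s : ℝ) :
    ∫ x : sphere (0 : E) 1, F x * fderiv ℝ F x (ξ - ⟪ξ, x⟫ • (x : E)) ∂μ ≤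
      ‖ξ‖ * (√(∫ x : sphere (0 : E) 1, F x ^ 2 * ‖(x : E) - s • ξ‖ ^ 2 ∂μ) *
        √(∫ x : sphere (0 : E) 1, ‖fderiv ℝ F x‖ ^ 2 ∂μ)) := by
  have hcont : Continuous fun x : sphere (0 : E) 1 => F x := hF.continuousOn.comp_sphere_val
  have hF' := hF.continuous_fderiv_comp_sphere_val
  have hpoint : ∀ x : sphere (0 : E) 1, F x * fderiv ℝ F x (ξ - ⟪ξ, x⟫ • (x : E)) ≤
      ‖ξ‖ * ((|F x| * ‖(x : E) - s • ξ‖) * ‖fderiv ℝ F x‖) := fun x =>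
    calc F x * fderiv ℝ F x (ξ - ⟪ξ, x⟫ • (x : E))
        ≤ |F x| * ‖fderiv ℝ F x (ξ - ⟪ξ, x⟫ • (x : E))‖ := by
          rw [Real.norm_eq_abs, ← abs_mul]
          exact le_abs_self _
      _ ≤ |F x| * (‖fderiv ℝ F x‖ * ‖ξ - ⟪ξ, x⟫ • (x : E)‖) := by
          gcongr
          exact (fderiv ℝ F x).le_opNorm _
      _ ≤ |F x| * (‖fderiv ℝ F x‖ * (‖ξ‖ * ‖(x : E) - s • ξ‖)) := by
          gcongr
          exact norm_sub_inner_smul_le_mul_norm_sub (norm_eq_of_mem_sphere x) ξ s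
      _ = ‖ξ‖ * ((|F x| * ‖(x : E) - s • ξ‖) * ‖fderiv ℝ F x‖) := by ring
  have hg : Continuous fun x : sphere (0 : E) 1 => |F x| * ‖(x : E) - s • ξ‖ :=
    hcont.abs.mul (continuous_subtype_val.sub continuous_const).norm
  calc ∫ x : sphere (0 : E) 1, F x * fderiv ℝ F x (ξ - ⟪ξ, x⟫ • (x : E)) ∂μ
      ≤ ∫ x : sphere (0 : E) 1, ‖ξ‖ * ((|F x| * ‖(x : E) - s • ξ‖) * ‖fderiv ℝ F x‖) ∂μ :=
        integral_mono (hcont.mul (hF'.clm_apply (by fun_prop))).integrable_of_compactSpace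
          (continuous_const.mul (hg.mul hF'.norm)).integrable_of_compactSpace hpoint
    _ = ‖ξ‖ * ∫ x : sphere (0 : E) 1, (|F x| * ‖(x : E) - s • ξ‖) * ‖fderiv ℝ F x‖ ∂μ :=
        integral_const_mul _ _
    _ ≤ ‖ξ‖ * (√(∫ x : sphere (0 : E) 1, (|F x| * ‖(x : E) - s • ξ‖) ^ 2 ∂μ) *
        √(∫ x : sphere (0 : E) 1, ‖fderiv ℝ F x‖ ^ 2 ∂μ)) := by
        gcongr
        exact integral_mul_le_sqrt_mul_sqrt (.of_forall fun x => by positivity)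
          (.of_forall fun x => norm_nonneg _) (hg.memLp_of_hasCompactSupport (.of_compactSpace _))
          (hF'.norm.memLp_of_hasCompactSupport (.of_compactSpace _))
    _ = _ := by simp_rw [mul_pow, sq_abs]

theorem IsIsometryInvariant.uncertainty_principle (hμ : IsIsometryInvariant μ) {F : E → ℝ}
    (hF : ContDiffOn ℝ 1 F {0}ᶜ) :
    ((finrank ℝ E : ℝ) - 1) / 2 * ‖∫ x : sphere (0 : E) 1, F x ^ 2 • (x : E) ∂μ‖ ≤
      √(∫ x : sphere (0 : E) 1, F x ^ 2 ∂μ -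
          ‖∫ x : sphere (0 : E) 1, F x ^ 2 • (x : E) ∂μ‖ ^ 2 / ∫ x : sphere (0 : E) 1, F x ^ 2 ∂μ) *
        √(∫ x : sphere (0 : E) 1, ‖fderiv ℝ F x‖ ^ 2 ∂μ) := by
  have hle := integral_mul_fderiv_apply_le (μ := μ) hF
    (∫ x : sphere (0 : E) 1, F x ^ 2 • (x : E) ∂μ) (∫ x : sphere (0 : E) 1, F x ^ 2 ∂μ)⁻¹
  rw [integral_mul_norm_sub_inv_smul_sq (f := fun x : sphere (0 : E) 1 => F x ^ 2)
    (hF.continuousOn.comp_sphere_val.pow 2)] at hle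
  set ξ := ∫ x : sphere (0 : E) 1, F x ^ 2 • (x : E) ∂μ
  have hdiv := hμ.finrank_sub_one_mul_inner_integral_sq_smul hF ξ
  rw [real_inner_self_eq_norm_sq] at hdiv
  rcases (norm_nonneg ξ).eq_or_lt with hξ0 | hξ0
  · rw [← hξ0, mul_zero]
    positivity
  · refine le_of_mul_le_mul_left ?_ hξ0
    linarith

end Sphere

/-- The uncertainty principle on `S^n` (the weak form of the Goh–Goodman theorem):
for a non-zero `C¹` function `F` on the sphere (realized as a degree-`0` homogeneous
function on `ℝ^{n+1} \ {0}`, so that its surface gradient at points of the sphere is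
`fderiv ℝ F`), with `μ` the normalized rotation-invariant measure on `S^n`,
`√(‖F‖₂² - ‖∫ x|F|²dσ‖²/‖F‖₂²) · ‖∇F‖₂ ≥ (n/2)·‖∫ x|F|²dσ‖`. -/
theorem spherical_uncertainty_principle (n : ℕ)
    (μ : Measure (sphere (0 : EuclideanSpace ℝ (Fin (n + 1))) 1))
    [IsProbabilityMeasure μ]
    (hinv : ∀ g : EuclideanSpace ℝ (Fin (n + 1)) ≃ₗᵢ[ℝ] EuclideanSpace ℝ (Fin (n + 1)),
      Measure.map
        (fun x : sphere (0 : EuclideanSpace ℝ (Fin (n + 1))) 1 =>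
          (⟨g x.1, by
            have hx := x.2
            simp only [mem_sphere_iff_norm, sub_zero] at hx ⊢
            rw [g.norm_map]; exact hx⟩ :
            sphere (0 : EuclideanSpace ℝ (Fin (n + 1))) 1)) μ = μ)
    (F : EuclideanSpace ℝ (Fin (n + 1)) → ℝ)
    (hC1 : ContDiffOn ℝ 1 F {(0 : EuclideanSpace ℝ (Fin (n + 1)))}ᶜ) :
    Real.sqrt ((∫ x, F x.1 ^ 2 ∂μ) -
          ‖∫ x, F x.1 ^ 2 • (x.1 : EuclideanSpace ℝ (Fin (n + 1))) ∂μ‖ ^ 2 /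
            ∫ x, F x.1 ^ 2 ∂μ) *
        Real.sqrt (∫ x, ‖fderiv ℝ F x.1‖ ^ 2 ∂μ) ≥
      (n : ℝ) / 2 * ‖∫ x, F x.1 ^ 2 • (x.1 : EuclideanSpace ℝ (Fin (n + 1))) ∂μ‖ := by
  simpa [finrank_euclideanSpace_fin] using
    (show IsIsometryInvariant μ from hinv).uncertainty_principle hC1
end
end
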